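/- Let U, V be finite-dimensional vector spaces over a field F, U_0 a linear subspace of U, π : U → U/U_0 the canonical projection, and S a linear subspace of Hom(U,V). Let S_{U_0} = {u ∈ S : u(x) = 0 for all x ∈ U_0} and S^⊥ = {v ∈ Hom(V,U) : tr(v∘u) = 0 for all u ∈ S}. Then dim S_{U_0} + dim(π∘S^⊥) = (dim V)(dim U − dim U_0), where π∘S^⊥ = {π∘v : v ∈ S^⊥} ⊆ Hom(V, U/U_0). -/

import Mathlib

variable {F U V : Type*} [Field F] [AddCommGroup U] [Module F U]
  [AddCommGroup V] [Module F V]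

/-- The subspace of S of maps vanishing on U₀. -/
def vanishOn (F : Type*) [Field F] {U V : Type*} [AddCommGroup U] [Module F U]
    [AddCommGroup V] [Module F V] (U0 : Submodule F U) : Submodule F (U →ₗ[F] V) where
  carrier := {u | ∀ x ∈ U0, u x = 0}
  add_mem' := fun ha hb x hx => by simp [ha x hx, hb x hx]
  zero_mem' := fun x _ => rfl
  smul_mem' := fun c u hu x hx => by simp [hu x hx]

/-- The trace-orthogonal space S^⊥ ⊆ Hom(V,U) of a subspace S ⊆ Hom(U,V). -/
def traceOrtho (F : Type*) [Field F] {U V : Type*} [AddCommGroup U] [Module F U]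
    [AddCommGroup V] [Module F V] (S : Submodule F (U →ₗ[F] V)) :
    Submodule F (V →ₗ[F] U) where
  carrier := {v | ∀ u ∈ S, LinearMap.trace F U (v ∘ₗ u) = 0}
  add_mem' := by
    intro a b ha hb u hu
    rw [LinearMap.add_comp, map_add, ha u hu, hb u hu, add_zero]
  zero_mem' := by
    intro u hu
    rw [LinearMap.zero_comp, map_zero]
  smul_mem' := by
    intro c v hv u hu
    rw [LinearMap.smul_comp, map_smul, hv u hu, smul_zero]

/-!
The trace pairing `(v, u) ↦ tr (v ∘ u)` between `Hom(V, U)` and `Hom(U, V)` is perfect, so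
`traceOrtho` is the dual annihilator in disguise. Write `π : U → U/U₀` and `T = π ∘ S^⊥`.
Under the trace pairing, the transpose of `v ↦ π ∘ v` is `w ↦ w ∘ π`, hence the orthogonal of `T`
in `Hom(U/U₀, V)` is `{w | w ∘ π ∈ S^⊥⊥ = S}`. As `w ↦ w ∘ π` identifies `Hom(U/U₀, V)` with the
maps vanishing on `U₀`, this orthogonal has the dimension of `S_{U₀}`, and
`dim T + dim T^⊥ = dim Hom(V, U/U₀) = dim V · (dim U - dim U₀)`.
-/

open LinearMap Module

@[simp] lemma mem_traceOrtho {S : Submodule F (U →ₗ[F] V)} {v : V →ₗ[F] U} :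
    v ∈ traceOrtho F S ↔ ∀ u ∈ S, trace F U (v ∘ₗ u) = 0 := Iff.rfl

variable (F U V) in
noncomputable def tracePair : (V →ₗ[F] U) →ₗ[F] Dual F (U →ₗ[F] V) :=
  (llcomp F U V U).compr₂ (trace F U)

@[simp] lemma tracePair_apply (v : V →ₗ[F] U) (u : U →ₗ[F] V) :
    tracePair F U V v u = trace F U (v ∘ₗ u) := rfl

lemma tracePair_injective [FiniteDimensional F U] : Function.Injective (tracePair F U V) := by
  refine (injective_iff_map_eq_zero _).2 fun v hv => ext fun y => ?_
  refine (forall_dual_apply_eq_zero_iff F (v y)).1 fun φ => ?_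
  have hcomp : v ∘ₗ φ.smulRight y = φ.smulRight (v y) := by ext; simp
  simpa [hcomp, trace_smulRight] using LinearMap.congr_fun hv (φ.smulRight y)

lemma tracePair_bijective [FiniteDimensional F U] [FiniteDimensional F V] :
    Function.Bijective (tracePair F U V) := by
  refine ⟨tracePair_injective, ?_⟩
  refine (injective_iff_surjective_of_finrank_eq_finrank ?_).1 tracePair_injective
  rw [Subspace.dual_finrank_eq, finrank_linearMap, finrank_linearMap, mul_comm]

lemma traceOrtho_eq_comap (S : Submodule F (U →ₗ[F] V)) :
    traceOrtho F S = S.dualAnnihilator.comap (tracePair F U V) := by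
  ext v
  simp [Submodule.mem_dualAnnihilator]

lemma finrank_add_finrank_traceOrtho [FiniteDimensional F U] [FiniteDimensional F V]
    (S : Submodule F (U →ₗ[F] V)) :
    finrank F S + finrank F (traceOrtho F S) = finrank F U * finrank F V := by
  let e := LinearEquiv.ofBijective (tracePair F U V) tracePair_bijective
  have : finrank F (traceOrtho F S) = finrank F S.dualAnnihilator := by
    rw [traceOrtho_eq_comap, show tracePair F U V = e from rfl,
      Submodule.comap_equiv_eq_map_symm, LinearEquiv.finrank_map_eq]
  rw [this, Subspace.finrank_add_finrank_dualAnnihilator_eq, finrank_linearMap]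

lemma traceOrtho_traceOrtho [FiniteDimensional F U] [FiniteDimensional F V]
    (S : Submodule F (U →ₗ[F] V)) : traceOrtho F (traceOrtho F S) = S := by
  have hmap : (traceOrtho F S).map (tracePair F U V) = S.dualAnnihilator := by
    rw [traceOrtho_eq_comap, Submodule.map_comap_eq_of_surjective tracePair_bijective.2]
  conv_rhs => rw [← Subspace.dualAnnihilator_dualCoannihilator_eq (W := S), ← hmap]
  ext u
  simp [Submodule.mem_dualCoannihilator, trace_comp_comm' u]

lemma traceOrtho_map_llcomp {P : Type*} [AddCommGroup P] [Module F P]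
    [FiniteDimensional F U] [FiniteDimensional F V] (S : Submodule F (U →ₗ[F] V))
    (g : U →ₗ[F] P) :
    traceOrtho F ((traceOrtho F S).map (llcomp F V U P g)) = S.comap (lcomp F V g) := by
  conv_rhs => rw [← traceOrtho_traceOrtho S]
  ext w
  simp only [mem_traceOrtho, Submodule.mem_map, Submodule.mem_comap, forall_exists_index,
    and_imp, forall_apply_eq_imp_iff₂, llcomp_apply', lcomp_apply', comp_assoc]

lemma lcomp_mkQ_injective (U0 : Submodule F U) :
    Function.Injective (lcomp F V U0.mkQ) :=
  fun _ _ h => (cancel_right U0.mkQ_surjective).1 h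

lemma range_lcomp_mkQ (U0 : Submodule F U) : range (lcomp F V U0.mkQ) = vanishOn F U0 := by
  ext u
  constructor
  · rintro ⟨w, rfl⟩ x hx
    simp [(Submodule.Quotient.mk_eq_zero U0).2 hx]
  · exact fun hu => ⟨U0.liftQ u hu, U0.liftQ_mkQ u hu⟩

lemma finrank_inf_vanishOn (U0 : Submodule F U) (S : Submodule F (U →ₗ[F] V)) :
    finrank F (S ⊓ vanishOn F U0 : Submodule F (U →ₗ[F] V)) =
      finrank F (S.comap (lcomp F V U0.mkQ)) := by
  rw [← range_lcomp_mkQ, inf_comm, ← Submodule.map_comap_eq]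
  exact (Submodule.equivMapOfInjective _ (lcomp_mkQ_injective U0) _).finrank_eq.symm

/-- Second Trace Orthogonality Lemma:
dim S_{U₀} + dim(π ∘ S^⊥) = (dim V)(dim U - dim U₀), where π : U → U/U₀. -/
theorem stmt11 [FiniteDimensional F U] [FiniteDimensional F V]
    (U0 : Submodule F U) (S : Submodule F (U →ₗ[F] V)) :
    Module.finrank F ↥(S ⊓ vanishOn F U0) +
      Module.finrank F ↥((traceOrtho F S).map
        (LinearMap.llcomp F V U (U ⧸ U0) U0.mkQ)) =
    Module.finrank F V * (Module.finrank F U - Module.finrank F U0) := by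
  rw [finrank_inf_vanishOn, ← traceOrtho_map_llcomp, add_comm,
    finrank_add_finrank_traceOrtho, Submodule.finrank_quotient]
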